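/- Let $f_N$ be a polynomial of degree at most $2d_0$ in $\bar{x} \in \mathbb{R}^{n-1}$, let $\epsilon > 0$, let $g = (x_1,\ldots,x_{n-1}, 1 - e^T\bar{x})$, and consider the moment relaxation: minimize $\langle f_N, y \rangle + \epsilon \|y\|$ over $y \in \mathbb{R}^{\mathbb{N}^{n-1}_{2d_0}}$ subject to $y_0 = 1$, $M_{d_0}[y] \succeq 0$, and $L_{g_i}^{(d_0)}[y] \succeq 0$ for all $i$. If this relaxation has a global minimizer $y^*$ with $\mathrm{rank}\, M_{d_0}[y^*] = 1$, then the point $u = (y^*_{e_1}, \ldots, y^*_{e_{n-1}})$ is a global minimizer of the problem: minimize $f_N(\bar{x}) + \epsilon \|[\bar{x}]_{2d_0}\|$ over the simplex $\{\bar{x} \ge 0, 1 - e^T\bar{x} \ge 0\}$, and the two optimal values coincide. -/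

import Mathlib

/-!
A moment matrix of rank one with `y₀ = 1` is `v vᵀ` for its first row `v`,
so `y_{α+β} = y_α y_β` whenever `|α|, |β| ≤ d₀`. Splitting exponents of degree `≤ 2d₀` into two
halves, `y*` is the truncated moment sequence `(u^α)` of the point `u = (y*_{e_i})`; the
order-zero entries of the localizing matrices put `u` in the simplex, and the relaxed objective at
`y*` is the original objective at `u`. Conversely every point `x` of the simplex yields the feasible
moment sequence `(x^α)` with relaxed objective equal to the original one at `x`, so the
minimality of `y*` transfers to `u`.
-/

noncomputable section

/-- Index set of monomial exponents of degree at most `d` in `n` variables. -/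
def Idx (n d : ℕ) := {α : Fin n → Fin (d + 1) // ∑ i, (α i : ℕ) ≤ d}

instance (n d : ℕ) : Fintype (Idx n d) := by unfold Idx; infer_instance

/-- The moment matrix `M_d[y]`. -/
def momMat (n d : ℕ) (y : (Fin n → ℕ) → ℝ) : Matrix (Idx n d) (Idx n d) ℝ :=
  Matrix.of fun a b => y (fun i => (a.1 i : ℕ) + (b.1 i : ℕ))

/-- The monomial `u^α`. -/
def mono {n : ℕ} (u : Fin n → ℝ) (α : Fin n → ℕ) : ℝ := ∏ i, u i ^ α i

/-- The localizing matrix of `g` with index degree at most `m`. -/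
def locMat {n : ℕ} (g : MvPolynomial (Fin n) ℝ) (m : ℕ)
    (y : (Fin n → ℕ) → ℝ) : Matrix (Idx n m) (Idx n m) ℝ :=
  Matrix.of fun a b =>
    ∑ γ ∈ g.support, g.coeff γ * y (fun i => γ i + (a.1 i : ℕ) + (b.1 i : ℕ))

/-- The Riesz pairing `⟨f, y⟩ = ∑_α f_α y_α`. -/
def riesz {n : ℕ} (f : MvPolynomial (Fin n) ℝ) (y : (Fin n → ℕ) → ℝ) : ℝ :=
  ∑ γ ∈ f.support, f.coeff γ * y (fun i => γ i)

/-- The Euclidean norm of the truncation of `y` to degree `d`. -/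
def tmsNorm (n d : ℕ) (y : (Fin n → ℕ) → ℝ) : ℝ :=
  Real.sqrt (∑ a : Idx n d, (y (fun i => (a.1 i : ℕ))) ^ 2)

/-- Feasibility for the moment relaxation of the PSAA model over the simplex,
with constraints `g = (x₁, …, xₙ, 1 - eᵀx)`. -/
def Feas (n d0 : ℕ) (y : (Fin n → ℕ) → ℝ) : Prop :=
  y 0 = 1 ∧ (momMat n d0 y).PosSemidef ∧
  (∀ i : Fin n, (locMat (MvPolynomial.X i) (d0 - 1) y).PosSemidef) ∧
  (locMat (1 - ∑ i : Fin n, MvPolynomial.X i) (d0 - 1) y).PosSemidef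

open Matrix MvPolynomial

theorem Matrix.apply_eq_mul_of_rank_eq_one {K m n : Type*} [Field K] [Fintype n]
    {A : Matrix m n K} (hA : A.rank = 1) {i₀ : m} {j₀ : n} (h₀ : A i₀ j₀ = 1) (i : m) (j : n) :
    A i j = A i j₀ * A i₀ j := by
  -- The column space is a line through the nonzero column `j₀`, so every column is a multiple of it.
  rw [rank_eq_finrank_span_cols] at hA
  set V := Submodule.span K (Set.range A.col)
  have hcol : ∀ k, A.col k ∈ V := fun k => Submodule.subset_span ⟨k, rfl⟩
  have hne : (⟨A.col j₀, hcol j₀⟩ : V) ≠ 0 := fun h => by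
    simpa [h₀] using congrFun (congrArg Subtype.val h) i₀
  obtain ⟨c, hc⟩ := (finrank_eq_one_iff_of_nonzero' _ hne).mp hA ⟨A.col j, hcol j⟩
  have hcj : ∀ k, c * A k j₀ = A k j := fun k => congrFun (congrArg Subtype.val hc) k
  rw [← hcj i, ← hcj i₀, h₀, mul_one, mul_comm]

theorem Fintype.exists_le_sum_eq {ι : Type*} [Fintype ι] (γ : ι → ℕ) {k : ℕ}
    (hk : k ≤ ∑ i, γ i) : ∃ α ≤ γ, ∑ i, α i = k := by
  classical
  induction k with
  | zero => exact ⟨0, zero_le, by simp⟩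
  | succ k ih =>
    obtain ⟨α, hαγ, hα⟩ := ih (by omega)
    obtain ⟨i, hi⟩ : ∃ i, α i < γ i := by
      by_contra! h
      have := Finset.sum_le_sum fun i (_ : i ∈ Finset.univ) => h i
      omega
    refine ⟨α + Pi.single i 1, fun j => ?_, ?_⟩
    · rcases eq_or_ne j i with rfl | hj
      · simpa using hi
      · simpa [hj] using hαγ j
    · simp [Finset.sum_add_distrib, hα]

theorem Fintype.exists_add_eq_of_sum_le_add {ι : Type*} [Fintype ι] (γ : ι → ℕ) {a b : ℕ}
    (h : ∑ i, γ i ≤ a + b) : ∃ α β : ι → ℕ, α + β = γ ∧ ∑ i, α i ≤ a ∧ ∑ i, β i ≤ b := by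
  obtain ⟨α, hαγ, hα⟩ := exists_le_sum_eq γ (min_le_right a _)
  refine ⟨α, γ - α, add_tsub_cancel_of_le hαγ, by omega, ?_⟩
  rw [Pi.sub_def, Finset.sum_tsub_distrib _ fun i _ => hαγ i]
  omega

namespace Idx

variable {n d : ℕ}

def ofExp (α : Fin n → ℕ) (hα : ∑ i, α i ≤ d) : Idx n d :=
  ⟨fun i => ⟨α i, Nat.lt_succ_of_le <| (Finset.single_le_sum (fun j _ => (α j).zero_le)
    (Finset.mem_univ i)).trans hα⟩, hα⟩

instance : Zero (Idx n d) := ⟨ofExp 0 (by simp)⟩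

end Idx

section Moments

variable {n : ℕ}

theorem mono_zero (x : Fin n → ℝ) : mono x 0 = 1 := by simp [mono]

theorem mono_add (x : Fin n → ℝ) (α β : Fin n → ℕ) : mono x (α + β) = mono x α * mono x β := by
  simp [mono, pow_add, Finset.prod_mul_distrib]

theorem mono_single (x : Fin n → ℝ) (i : Fin n) (k : ℕ) : mono x (Pi.single i k) = x i ^ k := by
  simp [mono, Pi.single_apply, pow_ite]

def rieszLinear (y : (Fin n → ℕ) → ℝ) : MvPolynomial (Fin n) ℝ →ₗ[ℝ] ℝ :=
  Finsupp.linearCombination ℝ (fun γ : Fin n →₀ ℕ => y γ) ∘ₗ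
    (AddMonoidAlgebra.coeffLinearEquiv ℝ).toLinearMap

theorem rieszLinear_apply (y : (Fin n → ℕ) → ℝ) (f : MvPolynomial (Fin n) ℝ) :
    rieszLinear y f = riesz f y := rfl

theorem riesz_monomial (γ : Fin n →₀ ℕ) (c : ℝ) (y : (Fin n → ℕ) → ℝ) :
    riesz (monomial γ c) y = c * y γ := by
  simp [← rieszLinear_apply, rieszLinear, monomial]

theorem riesz_X (i : Fin n) (y : (Fin n → ℕ) → ℝ) : riesz (X i) y = y (Pi.single i 1) := by
  rw [X, riesz_monomial, one_mul, Finsupp.single_eq_pi_single]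

theorem riesz_one_sub_sum_X (y : (Fin n → ℕ) → ℝ) :
    riesz (1 - ∑ i, X i) y = y 0 - ∑ i, y (Pi.single i 1) := by
  simp only [← rieszLinear_apply, map_sub, map_sum]
  rw [← C_1, C_apply]
  simp only [rieszLinear_apply, riesz_X, riesz_monomial, one_mul, Finsupp.coe_zero]

theorem riesz_eq_eval {f : MvPolynomial (Fin n) ℝ} {y : (Fin n → ℕ) → ℝ} {x : Fin n → ℝ}
    (h : ∀ γ ∈ f.support, y γ = mono x γ) : riesz f y = eval x f := by
  rw [eval_eq']
  exact Finset.sum_congr rfl fun γ hγ => by rw [h γ hγ, mono]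

theorem riesz_mono (f : MvPolynomial (Fin n) ℝ) (x : Fin n → ℝ) :
    riesz f (mono x) = eval x f :=
  riesz_eq_eval fun _ _ => rfl

theorem riesz_eq_eval_of_totalDegree_le {f : MvPolynomial (Fin n) ℝ} {y : (Fin n → ℕ) → ℝ}
    {x : Fin n → ℝ} {D : ℕ} (h : ∀ γ : Fin n → ℕ, ∑ i, γ i ≤ D → y γ = mono x γ)
    (hf : f.totalDegree ≤ D) : riesz f y = eval x f :=
  riesz_eq_eval fun γ hγ => h γ <| by
    simpa [Finsupp.sum_fintype] using (le_totalDegree hγ).trans hf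

theorem tmsNorm_congr {d : ℕ} {y y' : (Fin n → ℕ) → ℝ}
    (h : ∀ γ : Fin n → ℕ, ∑ i, γ i ≤ d → y γ = y' γ) : tmsNorm n d y = tmsNorm n d y' := by
  unfold tmsNorm
  congr 1
  exact Finset.sum_congr rfl fun a _ => by rw [h _ a.2]

theorem locMat_zero_zero (g : MvPolynomial (Fin n) ℝ) (m : ℕ) (y : (Fin n → ℕ) → ℝ) :
    locMat g m y 0 0 = riesz g y := rfl

theorem locMat_mono (g : MvPolynomial (Fin n) ℝ) (m : ℕ) (x : Fin n → ℝ) :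
    locMat g m (mono x) =
      eval x g • vecMulVec (fun a : Idx n m => mono x fun i => a.1 i)
        (fun a : Idx n m => mono x fun i => a.1 i) := by
  ext a b
  simp only [locMat, of_apply, Matrix.smul_apply, vecMulVec_apply, smul_eq_mul, eval_eq',
    Finset.sum_mul]
  refine Finset.sum_congr rfl fun γ _ => ?_
  rw [show (fun i => γ i + (a.1 i : ℕ) + (b.1 i : ℕ)) =
    ⇑γ + (fun i => (a.1 i : ℕ)) + (fun i => (b.1 i : ℕ)) from rfl, mono_add, mono_add, mono]
  ring

theorem momMat_mono (d : ℕ) (x : Fin n → ℝ) :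
    momMat n d (mono x) = vecMulVec (fun a : Idx n d => mono x fun i => a.1 i)
      (fun a : Idx n d => mono x fun i => a.1 i) := by
  ext a b
  exact mono_add x _ _

theorem feas_mono (d : ℕ) {x : Fin n → ℝ} (hx : ∀ i, 0 ≤ x i) (hx1 : ∑ i, x i ≤ 1) :
    Feas n d (mono x) := by
  refine ⟨mono_zero x, ?_, fun i => ?_, ?_⟩
  · rw [momMat_mono]
    exact posSemidef_vecMulVec_self_star _
  · rw [locMat_mono]
    exact (posSemidef_vecMulVec_self_star _).smul (by simpa using hx i)
  · rw [locMat_mono]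
    exact (posSemidef_vecMulVec_self_star _).smul (by simpa using hx1)

theorem Feas.single_nonneg {d : ℕ} {y : (Fin n → ℕ) → ℝ} (hy : Feas n d y) (i : Fin n) :
    0 ≤ y (Pi.single i 1) := by
  simpa [locMat_zero_zero, riesz_X] using (hy.2.2.1 i).diag_nonneg (i := 0)

theorem Feas.sum_single_le_one {d : ℕ} {y : (Fin n → ℕ) → ℝ} (hy : Feas n d y) :
    ∑ i, y (Pi.single i 1) ≤ 1 := by
  have := hy.2.2.2.diag_nonneg (i := 0)
  rw [locMat_zero_zero, riesz_one_sub_sum_X, hy.1] at this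
  linarith

end Moments

section RankOne

variable {n d : ℕ} {y : (Fin n → ℕ) → ℝ}

theorem map_add_eq_mul_of_rank_momMat_eq_one (hy0 : y 0 = 1)
    (hrank : (momMat n d y).rank = 1) {α β : Fin n → ℕ} (hα : ∑ i, α i ≤ d)
    (hβ : ∑ i, β i ≤ d) : y (α + β) = y α * y β := by
  have h := apply_eq_mul_of_rank_eq_one hrank (i₀ := 0) (j₀ := 0) hy0
    (Idx.ofExp α hα) (Idx.ofExp β hβ)
  change y (α + β) = y (α + 0) * y (0 + β) at h
  rwa [add_zero, zero_add] at h

theorem eq_mono_of_sum_le (hy0 : y 0 = 1)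
    (hmul : ∀ α β : Fin n → ℕ, ∑ i, α i ≤ d → ∑ i, β i ≤ d → y (α + β) = y α * y β)
    (α : Fin n → ℕ) (hα : ∑ i, α i ≤ d) : y α = mono (fun i => y (Pi.single i 1)) α := by
  induction hk : ∑ i, α i generalizing α with
  | zero =>
    obtain rfl : α = 0 := funext fun i => Finset.sum_eq_zero_iff.mp hk i (Finset.mem_univ i)
    rw [hy0, mono_zero]
  | succ k ih =>
    obtain ⟨i, -, hi⟩ := Finset.exists_ne_zero_of_sum_ne_zero (by rw [hk]; exact k.succ_ne_zero)
    have hle : Pi.single i 1 ≤ α := fun j => by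
      rcases eq_or_ne j i with rfl | hj
      · simpa [Nat.one_le_iff_ne_zero] using hi
      · simp [hj]
    have hsum : ∑ j, (α - Pi.single i 1 : Fin n → ℕ) j = k := by
      rw [Pi.sub_def, Finset.sum_tsub_distrib _ fun j _ => hle j]
      simp [hk]
    rw [← add_tsub_cancel_of_le hle, hmul _ _ (by simp; omega) (by omega), mono_add,
      mono_single, pow_one, ih _ (by omega) hsum]

theorem eq_mono_of_rank_momMat_eq_one (hy0 : y 0 = 1) (hrank : (momMat n d y).rank = 1)
    (γ : Fin n → ℕ) (hγ : ∑ i, γ i ≤ 2 * d) : y γ = mono (fun i => y (Pi.single i 1)) γ := by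
  have hmul : ∀ α β : Fin n → ℕ, ∑ i, α i ≤ d → ∑ i, β i ≤ d → y (α + β) = y α * y β :=
    fun _ _ hα hβ => map_add_eq_mul_of_rank_momMat_eq_one hy0 hrank hα hβ
  obtain ⟨α, β, rfl, hα, hβ⟩ := Fintype.exists_add_eq_of_sum_le_add γ (two_mul d ▸ hγ)
  rw [hmul α β hα hβ, mono_add, eq_mono_of_sum_le hy0 hmul α hα, eq_mono_of_sum_le hy0 hmul β hβ]

end RankOne

theorem stmt_9_general (n d0 : ℕ)
    (fN : MvPolynomial (Fin n) ℝ) (hdeg : fN.totalDegree ≤ 2 * d0)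
    (ε : ℝ)
    (ystar : (Fin n → ℕ) → ℝ)
    (hfeas : Feas n d0 ystar)
    (hmin : ∀ y : (Fin n → ℕ) → ℝ, Feas n d0 y →
      riesz fN ystar + ε * tmsNorm n (2 * d0) ystar ≤
        riesz fN y + ε * tmsNorm n (2 * d0) y)
    (hrank : (momMat n d0 ystar).rank = 1)
    (u : Fin n → ℝ)
    (hu : u = fun i => ystar (fun j => if j = i then 1 else 0)) :
    (∀ i, 0 ≤ u i) ∧ (∑ i, u i ≤ 1) ∧
    (∀ x : Fin n → ℝ, (∀ i, 0 ≤ x i) → ∑ i, x i ≤ 1 →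
      MvPolynomial.eval u fN + ε * tmsNorm n (2 * d0) (fun α => mono u α) ≤
        MvPolynomial.eval x fN + ε * tmsNorm n (2 * d0) (fun α => mono x α)) ∧
    riesz fN ystar + ε * tmsNorm n (2 * d0) ystar =
      MvPolynomial.eval u fN + ε * tmsNorm n (2 * d0) (fun α => mono u α) := by
  replace hu : u = fun i => ystar (Pi.single i 1) :=
    hu.trans <| funext fun i => congrArg ystar <| funext fun j => (Pi.single_apply i 1 j).symm
  have hmom : ∀ γ : Fin n → ℕ, ∑ i, γ i ≤ 2 * d0 → ystar γ = mono u γ :=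
    hu ▸ eq_mono_of_rank_momMat_eq_one hfeas.1 hrank
  have hval : riesz fN ystar + ε * tmsNorm n (2 * d0) ystar =
      eval u fN + ε * tmsNorm n (2 * d0) (mono u) := by
    rw [riesz_eq_eval_of_totalDegree_le hmom hdeg, tmsNorm_congr hmom]
  subst hu
  refine ⟨hfeas.single_nonneg, hfeas.sum_single_le_one, fun x hx hx1 => ?_, hval⟩
  rw [← hval, ← riesz_mono]
  exact hmin _ (feas_mono d0 hx hx1)

/-- if the moment relaxation of the PSAA model has a minimizer
`y*` whose moment matrix has rank one, then `u = (y*_{e₁},…)` is a global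
minimizer of the PSAA problem on the simplex, with the same optimal value. -/
theorem stmt_9 (n d0 : ℕ) (hd0 : 1 ≤ d0)
    (fN : MvPolynomial (Fin n) ℝ) (hdeg : fN.totalDegree ≤ 2 * d0)
    (ε : ℝ) (hε : 0 < ε)
    (ystar : (Fin n → ℕ) → ℝ)
    (hfeas : Feas n d0 ystar)
    (hmin : ∀ y : (Fin n → ℕ) → ℝ, Feas n d0 y →
      riesz fN ystar + ε * tmsNorm n (2 * d0) ystar ≤
        riesz fN y + ε * tmsNorm n (2 * d0) y)
    (hrank : (momMat n d0 ystar).rank = 1)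
    (u : Fin n → ℝ)
    (hu : u = fun i => ystar (fun j => if j = i then 1 else 0)) :
    (∀ i, 0 ≤ u i) ∧ (∑ i, u i ≤ 1) ∧
    (∀ x : Fin n → ℝ, (∀ i, 0 ≤ x i) → ∑ i, x i ≤ 1 →
      MvPolynomial.eval u fN + ε * tmsNorm n (2 * d0) (fun α => mono u α) ≤
        MvPolynomial.eval x fN + ε * tmsNorm n (2 * d0) (fun α => mono x α)) ∧
    riesz fN ystar + ε * tmsNorm n (2 * d0) ystar =
      MvPolynomial.eval u fN + ε * tmsNorm n (2 * d0) (fun α => mono u α) :=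
  stmt_9_general n d0 fN hdeg ε ystar hfeas hmin hrank u hu
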